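/- arXiv:1805.03521 — 3 statements merged into one kernel-verified Lean document; each statement's English description precedes it below -/
import Mathlib

section
/- For all natural numbers n and p, the p-th derivative of T_n evaluated at x = ±1 equals (±1)^{n+p} · ∏_{k=0}^{p−1} (n² − k²)/(2k+1). -/
open Polynomial Polynomial.Chebyshev

namespace Polynomial.Chebyshev

variable {R : Type*} [CommRing R]

theorem T_eval_of_sq_eq_one {x : R} (hx : x ^ 2 = 1) (n : ℕ) : (T R n).eval x = x ^ n := by
  induction n using Nat.twoStepInduction with
  | zero => simp
  | one => simp
  | more n ih₀ ih₁ =>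
    have h := T_add_two R n
    push_cast at ih₁ ⊢
    simp only [h, eval_sub, eval_mul, eval_ofNat, eval_X, ih₀, ih₁]
    linear_combination x ^ n * hx

/-- At a square root of unity the factor `1 - x ^ 2` of the Chebyshev differential equation
vanishes, which turns it into a first-order recurrence in the order of the derivative. -/
theorem iterate_derivative_T_eval_succ_of_sq_eq_one {x : R} (hx : x ^ 2 = 1) (n : ℤ) (k : ℕ) :
    (2 * k + 1) * (derivative^[k + 1] (T R n)).eval x =
      x * (n ^ 2 - k ^ 2) * (derivative^[k] (T R n)).eval x := by
  have h := one_sub_X_sq_mul_iterate_derivative_T_eval n k x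
  rw [hx, sub_self, zero_mul] at h
  linear_combination -(2 * k + 1) * (derivative^[k + 1] (T R n)).eval x * hx - x * h

theorem iterate_derivative_T_eval_of_sq_eq_one {K : Type*} [Field K] [CharZero K] {x : K}
    (hx : x ^ 2 = 1) (n p : ℕ) :
    (derivative^[p] (T K n)).eval x =
      x ^ (n + p) * ∏ k ∈ Finset.range p, (((n : K) ^ 2 - (k : K) ^ 2) / (2 * k + 1)) := by
  induction p with
  | zero => simpa using T_eval_of_sq_eq_one hx n
  | succ p ih =>
    have hrec := iterate_derivative_T_eval_succ_of_sq_eq_one hx n p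
    have hp : (2 * p + 1 : K) ≠ 0 := by exact_mod_cast (2 * p).succ_ne_zero
    push_cast at hrec
    rw [Finset.prod_range_succ, ← add_assoc, pow_succ, mul_mul_mul_comm, ← ih,
      mul_div_assoc', mul_div_assoc', eq_div_iff hp]
    linear_combination hrec

end Polynomial.Chebyshev

theorem chebyshev_iterated_deriv_endpoint (n p : ℕ) (s : ℝ) (hs : s = 1 ∨ s = -1) :
    ((Polynomial.derivative)^[p] (T ℝ n)).eval s =
      s ^ (n + p) * ∏ k ∈ Finset.range p, (((n : ℝ) ^ 2 - (k : ℝ) ^ 2) / (2 * k + 1)) :=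
  iterate_derivative_T_eval_of_sq_eq_one (by rcases hs with rfl | rfl <;> norm_num) n p
end

section
/- The functions T_kl defined by T_kl(x) = ∫_{−1}^{x} T_k(x−τ−1)·T_l(τ) dτ ± ∫_x^1 T_k(x−τ+1)·T_l(τ) dτ (same choice of sign on both occurrences, i.e. T_kl = T_kl^− ± T_kl^+) are symmetric in their indices: T_lk(x) = T_kl(x) for all x ∈ [−1,1]. -/
open Polynomial Polynomial.Chebyshev

noncomputable def Tminus (k l : ℕ) (x : ℝ) : ℝ :=
  ∫ τ in (-1 : ℝ)..x, (T ℝ k).eval (x - τ - 1) * (T ℝ l).eval τ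

noncomputable def Tplus (k l : ℕ) (x : ℝ) : ℝ :=
  -∫ τ in x..(1 : ℝ), (T ℝ k).eval (x - τ + 1) * (T ℝ l).eval τ

/-! The reflection `τ ↦ a + b - τ` maps `[a, b]` onto itself and swaps the two factors of a
convolution-type integrand; both `Tminus` and `Tplus` are of this form, with `a + b = x - 1` and
`a + b = x + 1` respectively. -/

theorem intervalIntegral.integral_mul_comp_add_sub_comm (f g : ℝ → ℝ) (a b : ℝ) :
    ∫ τ in a..b, f (a + b - τ) * g τ = ∫ τ in a..b, g (a + b - τ) * f τ := by
  have h := intervalIntegral.integral_comp_sub_left (a := a) (b := b)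
    (fun τ => g (a + b - τ) * f τ) (a + b)
  simp only [sub_sub_cancel, add_sub_cancel_right, add_sub_cancel_left] at h
  rw [← h]
  exact intervalIntegral.integral_congr fun τ _ => mul_comm _ _

theorem Tminus_comm (k l : ℕ) (x : ℝ) : Tminus k l x = Tminus l k x := by
  have hshift : ∀ τ : ℝ, x - τ - 1 = -1 + x - τ := fun τ => by ring
  simp only [Tminus, hshift]
  exact intervalIntegral.integral_mul_comp_add_sub_comm (fun y => (T ℝ k).eval y)
    (fun y => (T ℝ l).eval y) (-1) x

theorem Tplus_comm (k l : ℕ) (x : ℝ) : Tplus k l x = Tplus l k x := by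
  have hshift : ∀ τ : ℝ, x - τ + 1 = x + 1 - τ := fun τ => by ring
  simp only [Tplus, hshift]
  rw [intervalIntegral.integral_mul_comp_add_sub_comm (fun y => (T ℝ k).eval y)
    (fun y => (T ℝ l).eval y) x 1]

theorem Tkl_symm_general (ε : ℝ) (k l : ℕ) (x : ℝ) :
    Tminus l k x + ε * Tplus l k x = Tminus k l x + ε * Tplus k l x := by
  rw [Tminus_comm l k, Tplus_comm l k]

theorem Tkl_symm (ε : ℝ) (hε : ε = 1 ∨ ε = -1) (k l : ℕ) (x : ℝ)
    (hx : x ∈ Set.Icc (-1 : ℝ) 1) :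
    Tminus l k x + ε * Tplus l k x = Tminus k l x + ε * Tplus k l x :=
  Tkl_symm_general ε k l x
end

section
/- The convolutions T_{k,l}^± satisfy the recurrence T_{k+1,l}^±(x) = 2x·T_{k,l}^±(x) − T_{k,l+1}^±(x) − T_{k,|l−1|}^±(x) ± 2·T_{k,l}^±(x) − T_{|k−1|,l}^±(x) for k ≥ 1. -/
open Polynomial Polynomial.Chebyshev

theorem T_eval_add_one_mul_T_eval {R : Type*} [CommRing R] (k l : ℤ) (y τ : R) :
    (T R (k + 1)).eval y * (T R l).eval τ =
      2 * (y + τ) * ((T R k).eval y * (T R l).eval τ)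
        - (T R k).eval y * (T R (l + 1)).eval τ
        - (T R k).eval y * (T R (l - 1)).eval τ
        - (T R (k - 1)).eval y * (T R l).eval τ := by
  have hk : (T R (k + 1)).eval y = 2 * y * (T R k).eval y - (T R (k - 1)).eval y := by
    simpa using congrArg (eval y) (T_add_one R k)
  have hl : (T R (l + 1)).eval τ = 2 * τ * (T R l).eval τ - (T R (l - 1)).eval τ := by
    simpa using congrArg (eval τ) (T_add_one R l)
  linear_combination (T R l).eval τ * hk + (T R k).eval y * hl

theorem intervalIntegrable_eval_sub_mul_eval (p q : ℝ[X]) (s a b : ℝ) :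
    IntervalIntegrable (fun τ => p.eval (s - τ) * q.eval τ) MeasureTheory.volume a b :=
  ((p.continuous.comp (continuous_sub_left s)).mul q.continuous).intervalIntegrable a b

noncomputable def chebConv (k l : ℤ) (s a b : ℝ) : ℝ :=
  ∫ τ in a..b, (T ℝ k).eval (s - τ) * (T ℝ l).eval τ

section chebConv

variable (k l : ℤ) (s a b : ℝ)

theorem chebConv_natAbs_left : chebConv k.natAbs l s a b = chebConv k l s a b := by
  simp only [chebConv, T_natAbs]

theorem chebConv_natAbs_right : chebConv k l.natAbs s a b = chebConv k l s a b := by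
  simp only [chebConv, T_natAbs]

theorem chebConv_add_one_left :
    chebConv (k + 1) l s a b =
      2 * s * chebConv k l s a b - chebConv k (l + 1) s a b - chebConv k (l - 1) s a b
        - chebConv (k - 1) l s a b := by
  have hpt (τ : ℝ) := T_eval_add_one_mul_T_eval k l (s - τ) τ
  simp only [sub_add_cancel] at hpt
  have hint (m n : ℤ) := intervalIntegrable_eval_sub_mul_eval (T ℝ m) (T ℝ n) s a b
  simp only [chebConv, hpt]
  rw [intervalIntegral.integral_sub (((hint k l).const_mul _ |>.sub (hint k (l + 1))).sub
      (hint k (l - 1))) (hint (k - 1) l),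
    intervalIntegral.integral_sub (((hint k l).const_mul _).sub (hint k (l + 1))) (hint k (l - 1)),
    intervalIntegral.integral_sub ((hint k l).const_mul _) (hint k (l + 1)),
    intervalIntegral.integral_const_mul]

end chebConv

theorem Tminus_eq_chebConv (k l : ℕ) (x : ℝ) : Tminus k l x = chebConv k l (x - 1) (-1) x := by
  simp only [Tminus, chebConv, sub_right_comm x _ (1 : ℝ)]

theorem Tplus_eq_neg_chebConv (k l : ℕ) (x : ℝ) : Tplus k l x = -chebConv k l (x + 1) x 1 := by
  simp only [Tplus, chebConv, sub_add_eq_add_sub]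

theorem Tkl_recurrence_general (k l : ℕ) (x : ℝ) :
    (Tminus (k + 1) l x =
      2 * x * Tminus k l x - Tminus k (l + 1) x - Tminus k (((l : ℤ) - 1).natAbs) x
        - 2 * Tminus k l x - Tminus (((k : ℤ) - 1).natAbs) l x) ∧
    (Tplus (k + 1) l x =
      2 * x * Tplus k l x - Tplus k (l + 1) x - Tplus k (((l : ℤ) - 1).natAbs) x
        + 2 * Tplus k l x - Tplus (((k : ℤ) - 1).natAbs) l x) := by
  simp only [Tminus_eq_chebConv, Tplus_eq_neg_chebConv, chebConv_natAbs_left,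
    chebConv_natAbs_right, Nat.cast_add, Nat.cast_one, chebConv_add_one_left]
  constructor <;> ring

theorem Tkl_recurrence (k l : ℕ) (hk : 1 ≤ k) (x : ℝ) :
    (Tminus (k + 1) l x =
      2 * x * Tminus k l x - Tminus k (l + 1) x - Tminus k (((l : ℤ) - 1).natAbs) x
        - 2 * Tminus k l x - Tminus (((k : ℤ) - 1).natAbs) l x) ∧
    (Tplus (k + 1) l x =
      2 * x * Tplus k l x - Tplus k (l + 1) x - Tplus k (((l : ℤ) - 1).natAbs) x
        + 2 * Tplus k l x - Tplus (((k : ℤ) - 1).natAbs) l x) :=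
  Tkl_recurrence_general k l x
end
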